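/- Let K ≥ 2 be an integer and α ∈ ℝ. Then 2·inf{ D_α(p‖q)/‖p−q‖₁² : p, q ∈ relint(Δ^K), p ≠ q } = inf{ Σ_{k=1}^K v_k²·γ_k^{α−2} : v ∈ T^K, γ ∈ relint(Δ^K) }, where T^K = {v ∈ ℝ^K : ‖v‖₁ = 1 and Σ_{k=1}^K v_k = 0}. -/

import Mathlib

/-! Along a segment `q + t u` in the simplex, `t ↦ D_α(q + t u ‖ q)` vanishes to first order at
`t = 0`, and its second derivative is the Hessian form `∑ u_k² (q_k + t u_k)^(α-2)` of `-S_α`.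
Hence a lower bound `B` for the Hessian form on the unit ℓ¹-sphere of the tangent space gives
`2 D_α(p‖q) ≥ B ‖p - q‖₁²`. Conversely `D_α(γ + t v ‖ γ) / t² → ½ ∑ v_k² γ_k^(α-2)` as `t → 0⁺`,
so every lower bound of the ratios `2 D_α(p‖q) / ‖p - q‖₁²` bounds the Hessian form. The two sets
thus have the same lower bounds, and therefore the same infimum. -/

open Finset Real

/-- The α-Tsallis entropy on the positive orthant (Shannon for α = 1, Burg for α = 0). -/
noncomputable def tsallis (α : ℝ) {K : ℕ} (p : Fin K → ℝ) : ℝ :=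
  if α = 0 then ∑ k, Real.log (p k)
  else if α = 1 then -∑ k, p k * Real.log (p k)
  else (∑ k, p k ^ α) / (α * (1 - α))

/-- The gradient of the α-Tsallis entropy on the positive orthant. -/
noncomputable def tsallisGrad (α : ℝ) {K : ℕ} (q : Fin K → ℝ) (k : Fin K) : ℝ :=
  if α = 0 then 1 / q k
  else if α = 1 then -(1 + Real.log (q k))
  else -(q k ^ (α - 1)) / (α - 1)

/-- The Bregman divergence D_α of the negative α-Tsallis entropy:
`D_α(p‖q) = -S_α(p) + S_α(q) + ⟨∇S_α(q), p - q⟩`. -/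
noncomputable def breg (α : ℝ) {K : ℕ} (p q : Fin K → ℝ) : ℝ :=
  -tsallis α p + tsallis α q + ∑ k, tsallisGrad α q k * (p k - q k)

/-- The relative interior of the probability simplex Δ^K. -/
def relintSimplex (K : ℕ) : Set (Fin K → ℝ) :=
  {p | (∀ k, 0 < p k ∧ p k < 1) ∧ ∑ k, p k = 1}

/-- The ℓ¹ norm on ℝ^K. -/
noncomputable def l1 {K : ℕ} (x : Fin K → ℝ) : ℝ := ∑ k, |x k|

/-- Unit ℓ¹-sphere of the tangent space of the simplex. -/
def tangentSphere (K : ℕ) : Set (Fin K → ℝ) :=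
  {v | (∑ k, |v k|) = 1 ∧ (∑ k, v k) = 0}

open Filter Topology

theorem Real.sInf_eq_sSup_lowerBounds (s : Set ℝ) : sInf s = sSup (lowerBounds s) := by
  rcases s.eq_empty_or_nonempty with rfl | hne
  · simp
  by_cases hbdd : BddBelow s
  · exact (csSup_lowerBounds_eq_csInf hbdd hne).symm
  · rw [Real.sInf_of_not_bddBelow hbdd, Set.not_nonempty_iff_eq_empty.mp hbdd, Real.sSup_empty]

theorem monotoneOn_Icc_of_hasDerivAt_nonneg {f f' : ℝ → ℝ} {a b : ℝ}
    (hf : ∀ t ∈ Set.Icc a b, HasDerivAt f (f' t) t) (hf' : ∀ t ∈ Set.Icc a b, 0 ≤ f' t) :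
    MonotoneOn f (Set.Icc a b) := by
  refine monotoneOn_of_hasDerivWithinAt_nonneg (f' := f') (convex_Icc a b)
    (fun t ht => (hf t ht).continuousAt.continuousWithinAt) (fun t ht => ?_) (fun t ht => ?_)
  all_goals rw [interior_Icc] at ht
  · exact (hf t (Set.Ioo_subset_Icc_self ht)).hasDerivWithinAt
  · exact hf' t (Set.Ioo_subset_Icc_self ht)

theorem le_of_hasDerivAt_of_hasDerivAt_nonneg {f f' f'' : ℝ → ℝ} {a b : ℝ} (hab : a ≤ b)
    (hf : ∀ t ∈ Set.Icc a b, HasDerivAt f (f' t) t)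
    (hf' : ∀ t ∈ Set.Icc a b, HasDerivAt f' (f'' t) t)
    (hf'' : ∀ t ∈ Set.Icc a b, 0 ≤ f'' t) (ha : 0 ≤ f' a) : f a ≤ f b := by
  have ha_mem : a ∈ Set.Icc a b := Set.left_mem_Icc.mpr hab
  have hf'_mono := monotoneOn_Icc_of_hasDerivAt_nonneg hf' hf''
  have hf'_nonneg : ∀ t ∈ Set.Icc a b, 0 ≤ f' t := fun t ht => ha.trans (hf'_mono ha_mem ht ht.1)
  exact monotoneOn_Icc_of_hasDerivAt_nonneg hf hf'_nonneg ha_mem (Set.right_mem_Icc.mpr hab) hab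

noncomputable def tsallisTerm (α x : ℝ) : ℝ :=
  if α = 0 then log x else if α = 1 then -(x * log x) else x ^ α / (α * (1 - α))

noncomputable def tsallisTermDeriv (α x : ℝ) : ℝ :=
  if α = 0 then 1 / x else if α = 1 then -(1 + log x) else -(x ^ (α - 1)) / (α - 1)

noncomputable def bregTerm (α x y : ℝ) : ℝ :=
  tsallisTerm α y - tsallisTerm α x + tsallisTermDeriv α y * (x - y)

theorem tsallis_eq_sum (α : ℝ) {K : ℕ} (p : Fin K → ℝ) :
    tsallis α p = ∑ k, tsallisTerm α (p k) := by
  unfold tsallis tsallisTerm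
  split_ifs <;> simp [sum_div]

theorem breg_eq_sum (α : ℝ) {K : ℕ} (p q : Fin K → ℝ) :
    breg α p q = ∑ k, bregTerm α (p k) (q k) := by
  simp only [breg, bregTerm, tsallis_eq_sum, sum_add_distrib, sum_sub_distrib]
  simp only [tsallisGrad, tsallisTermDeriv]
  ring

theorem hasDerivAt_tsallisTerm (α : ℝ) {x : ℝ} (hx : 0 < x) :
    HasDerivAt (tsallisTerm α) (tsallisTermDeriv α x) x := by
  unfold tsallisTerm tsallisTermDeriv
  split_ifs with h0 h1
  · simpa [one_div] using hasDerivAt_log hx.ne'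
  · exact (hasDerivAt_mul_log hx.ne').fun_neg.congr_deriv (by ring)
  · have hα1' : 1 - α ≠ 0 := sub_ne_zero.mpr (Ne.symm h1)
    refine ((hasDerivAt_rpow_const (p := α) (Or.inl hx.ne')).div_const _).congr_deriv ?_
    field_simp
    ring

theorem hasDerivAt_tsallisTermDeriv (α : ℝ) {x : ℝ} (hx : 0 < x) :
    HasDerivAt (tsallisTermDeriv α) (-x ^ (α - 2)) x := by
  unfold tsallisTermDeriv
  split_ifs with h0 h1
  · subst h0
    simp only [one_div]
    refine (hasDerivAt_inv hx.ne').congr_deriv ?_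
    rw [show (0 : ℝ) - 2 = -(2 : ℕ) by norm_num, rpow_neg hx.le, rpow_natCast]
  · subst h1
    refine ((hasDerivAt_log hx.ne').const_add 1).fun_neg.congr_deriv ?_
    norm_num [rpow_neg_one]
  · have hα1 : α - 1 ≠ 0 := sub_ne_zero.mpr h1
    refine ((hasDerivAt_rpow_const (p := α - 1) (Or.inl hx.ne')).fun_neg.div_const _).congr_deriv ?_
    rw [show α - 1 - 1 = α - 2 by ring]
    field_simp

theorem hasDerivAt_bregTerm_add_mul (α : ℝ) {x u t : ℝ} (hxt : 0 < x + t * u) :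
    HasDerivAt (fun s => bregTerm α (x + s * u) x)
      ((tsallisTermDeriv α x - tsallisTermDeriv α (x + t * u)) * u) t := by
  have hline : HasDerivAt (fun s => x + s * u) u t := by
    simpa using ((hasDerivAt_id t).mul_const u).const_add x
  have hterm := (hasDerivAt_tsallisTerm α hxt).comp t hline
  refine ((hterm.const_sub (tsallisTerm α x)).fun_add
    ((hasDerivAt_mul_const u).const_mul (tsallisTermDeriv α x))).congr_deriv ?_
    |>.congr_of_eventuallyEq ?_
  · ring
  · exact Eventually.of_forall fun s => by simp [bregTerm]

theorem hasDerivAt_tsallisTermDeriv_sub_mul (α : ℝ) {x u t : ℝ} (hxt : 0 < x + t * u) :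
    HasDerivAt (fun s => (tsallisTermDeriv α x - tsallisTermDeriv α (x + s * u)) * u)
      (u ^ 2 * (x + t * u) ^ (α - 2)) t := by
  have hline : HasDerivAt (fun s => x + s * u) u t := by
    simpa using ((hasDerivAt_id t).mul_const u).const_add x
  refine ((((hasDerivAt_tsallisTermDeriv α hxt).comp t hline).const_sub
    (tsallisTermDeriv α x)).mul_const u).congr_deriv ?_
  ring

noncomputable def tsallisHessForm (α : ℝ) {K : ℕ} (γ v : Fin K → ℝ) : ℝ :=
  ∑ k, v k ^ 2 * γ k ^ (α - 2)

theorem tsallisHessForm_smul (α c : ℝ) {K : ℕ} (γ v : Fin K → ℝ) :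
    tsallisHessForm α γ (c • v) = c ^ 2 * tsallisHessForm α γ v := by
  simp only [tsallisHessForm, mul_sum, Pi.smul_apply, smul_eq_mul]
  exact sum_congr rfl fun k _ => by ring

theorem l1_smul (c : ℝ) {K : ℕ} (v : Fin K → ℝ) : l1 (c • v) = |c| * l1 v := by
  simp [l1, abs_mul, mul_sum]

theorem l1_pos {K : ℕ} {v : Fin K → ℝ} : 0 < l1 v ↔ v ≠ 0 := by
  simp [l1, sum_pos_iff_of_nonneg, funext_iff]

theorem mul_sq_l1_le_tsallisHessForm {α B : ℝ} {K : ℕ} {γ u : Fin K → ℝ}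
    (hB : ∀ v ∈ tangentSphere K, B ≤ tsallisHessForm α γ v) (hu : ∑ k, u k = 0) :
    B * l1 u ^ 2 ≤ tsallisHessForm α γ u := by
  rcases eq_or_ne u 0 with rfl | hu0
  · simp [tsallisHessForm, l1]
  have hL : 0 < l1 u := l1_pos.mpr hu0
  have hv : (l1 u)⁻¹ • u ∈ tangentSphere K := by
    refine ⟨?_, ?_⟩
    · simp only [Pi.smul_apply, smul_eq_mul, abs_mul, abs_inv, abs_of_pos hL, ← mul_sum]
      exact inv_mul_cancel₀ hL.ne'
    · simp [← mul_sum, hu]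
  have hsplit : u = l1 u • (l1 u)⁻¹ • u := by rw [smul_smul, mul_inv_cancel₀ hL.ne', one_smul]
  calc B * l1 u ^ 2 ≤ l1 u ^ 2 * tsallisHessForm α γ ((l1 u)⁻¹ • u) := by
        rw [mul_comm]; exact mul_le_mul_of_nonneg_left (hB _ hv) (sq_nonneg _)
    _ = tsallisHessForm α γ u := by rw [← tsallisHessForm_smul, ← hsplit]

theorem convex_relintSimplex (K : ℕ) : Convex ℝ (relintSimplex K) := by
  rintro p ⟨hp, hp1⟩ q ⟨hq, hq1⟩ a b ha hb hab
  refine ⟨fun k => ?_, ?_⟩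
  · exact convex_Ioo 0 1 (hp k) (hq k) ha hb hab
  · simp [sum_add_distrib, ← mul_sum, hp1, hq1, hab]

theorem mul_sq_l1_le_two_mul_breg {α B : ℝ} {K : ℕ}
    (hB : ∀ γ ∈ relintSimplex K, ∀ v ∈ tangentSphere K, B ≤ tsallisHessForm α γ v)
    {p q : Fin K → ℝ} (hp : p ∈ relintSimplex K) (hq : q ∈ relintSimplex K) :
    B * l1 (p - q) ^ 2 ≤ 2 * breg α p q := by
  set u := p - q
  set L := l1 u
  have hseg : ∀ t ∈ Set.Icc (0 : ℝ) 1, q + t • u ∈ relintSimplex K :=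
    fun t ht => (convex_relintSimplex K).add_smul_sub_mem hq hp ht
  have hpos : ∀ t ∈ Set.Icc (0 : ℝ) 1, ∀ k, 0 < q k + t * u k := fun t ht k => ((hseg t ht).1 k).1
  have hu : ∑ k, u k = 0 := by simp [u, sum_sub_distrib, hp.2, hq.2]
  -- `f t = 2 D(q + t u ‖ q) - B L² t²` has `f 0 = f' 0 = 0` and, by `hB`, `f'' ≥ 0`.
  have key := le_of_hasDerivAt_of_hasDerivAt_nonneg zero_le_one
    (f := fun t => 2 * ∑ k, bregTerm α (q k + t * u k) (q k) - B * L ^ 2 * t ^ 2)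
    (f' := fun t => 2 * ∑ k, (tsallisTermDeriv α (q k) - tsallisTermDeriv α (q k + t * u k)) * u k
      - 2 * (B * L ^ 2) * t)
    (f'' := fun t => 2 * tsallisHessForm α (q + t • u) u - 2 * (B * L ^ 2))
    (fun t ht => by
      refine ((HasDerivAt.fun_sum fun k _ =>
        hasDerivAt_bregTerm_add_mul α (hpos t ht k)).const_mul 2
        |>.sub ((hasDerivAt_pow 2 t).const_mul _)).congr_deriv ?_
      ring)
    (fun t ht => by
      refine ((HasDerivAt.fun_sum fun k _ =>
        hasDerivAt_tsallisTermDeriv_sub_mul α (hpos t ht k)).const_mul 2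
        |>.sub ((hasDerivAt_id t).const_mul _)).congr_deriv ?_
      simp only [mul_one, tsallisHessForm, Pi.add_apply, Pi.smul_apply, smul_eq_mul])
    (fun t ht => by
      have := mul_sq_l1_le_tsallisHessForm (hB _ (hseg t ht)) hu
      linarith)
    (by simp)
  simpa [bregTerm, breg_eq_sum, u] using key

theorem tendsto_bregTerm_add_mul_div_sq (α : ℝ) {x : ℝ} (hx : 0 < x) (v : ℝ) :
    Tendsto (fun t => bregTerm α (x + t * v) x / t ^ 2) (𝓝[>] 0) (𝓝 (v ^ 2 * x ^ (α - 2) / 2)) := by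
  have hline : Tendsto (fun t : ℝ => x + t * v) (𝓝 0) (𝓝 x) := by
    simpa using ((continuous_mul_const v).const_add x).tendsto (0 : ℝ)
  have hpos : ∀ᶠ t in 𝓝 (0 : ℝ), 0 < x + t * v := hline.eventually (eventually_gt_nhds hx)
  have hx0 : 0 < x + 0 * v := by simpa using hx
  -- L'Hôpital: the quotient of the first derivatives is a difference quotient of the second.
  have hslope := hasDerivAt_iff_tendsto_slope.mp (hasDerivAt_tsallisTermDeriv_sub_mul α hx0)
  refine HasDerivAt.lhopital_zero_nhdsGT (g' := fun t => 2 * t)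
    (nhdsWithin_le_nhds (hpos.mono fun t ht => hasDerivAt_bregTerm_add_mul α ht))
    (Eventually.of_forall fun t => by simpa using hasDerivAt_pow 2 t)
    (eventually_nhdsWithin_of_forall fun t (ht : 0 < t) => by positivity)
    ?_ ?_ ?_
  · simpa [bregTerm] using
      (hasDerivAt_bregTerm_add_mul α hx0).continuousAt.tendsto.mono_left nhdsWithin_le_nhds
  · simpa using ((continuous_pow 2).tendsto (0 : ℝ)).mono_left nhdsWithin_le_nhds
  · rw [zero_mul, add_zero] at hslope
    refine ((hslope.div_const 2).mono_left (nhdsWithin_mono _ fun t ht => ne_of_gt ht)).congr' ?_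
    filter_upwards [self_mem_nhdsWithin] with t (ht : 0 < t)
    simp only [slope_def_field, zero_mul, add_zero, sub_self, sub_zero]
    field_simp

theorem tendsto_breg_add_smul_div_sq (α : ℝ) {K : ℕ} {γ : Fin K → ℝ} (hγ : ∀ k, 0 < γ k)
    (v : Fin K → ℝ) :
    Tendsto (fun t : ℝ => breg α (γ + t • v) γ / t ^ 2) (𝓝[>] 0)
      (𝓝 (tsallisHessForm α γ v / 2)) := by
  simp only [breg_eq_sum, tsallisHessForm, sum_div]
  exact tendsto_finsetSum _ fun k _ => tendsto_bregTerm_add_mul_div_sq α (hγ k) (v k)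

theorem eventually_add_smul_mem_relintSimplex {K : ℕ} {γ v : Fin K → ℝ}
    (hγ : γ ∈ relintSimplex K) (hv : ∑ k, v k = 0) :
    ∀ᶠ t : ℝ in 𝓝 0, γ + t • v ∈ relintSimplex K := by
  have hcoord : ∀ k, ∀ᶠ t : ℝ in 𝓝 0, γ k + t * v k ∈ Set.Ioo 0 1 := fun k => by
    have : Tendsto (fun t : ℝ => γ k + t * v k) (𝓝 0) (𝓝 (γ k)) := by
      simpa using ((continuous_mul_const (v k)).const_add (γ k)).tendsto (0 : ℝ)
    exact this.eventually (Ioo_mem_nhds (hγ.1 k).1 (hγ.1 k).2)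
  filter_upwards [eventually_all.2 hcoord] with t ht
  exact ⟨ht, by simp [sum_add_distrib, ← mul_sum, hv, hγ.2]⟩

theorem le_tsallisHessForm_of_forall_le_breg {α B : ℝ} {K : ℕ}
    (hB : ∀ p ∈ relintSimplex K, ∀ q ∈ relintSimplex K, p ≠ q →
      B ≤ 2 * (breg α p q / l1 (p - q) ^ 2))
    {γ v : Fin K → ℝ} (hγ : γ ∈ relintSimplex K) (hv : v ∈ tangentSphere K) :
    B ≤ tsallisHessForm α γ v := by
  have hv1 : l1 v = 1 := hv.1
  have hlim := (tendsto_breg_add_smul_div_sq α (fun k => (hγ.1 k).1) v).const_mul 2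
  rw [mul_div_cancel₀ _ two_ne_zero] at hlim
  refine ge_of_tendsto hlim ?_
  filter_upwards [nhdsWithin_le_nhds (eventually_add_smul_mem_relintSimplex hγ hv.2),
    self_mem_nhdsWithin] with t hmem (ht : 0 < t)
  have hne : γ + t • v ≠ γ := by
    rw [Ne, add_eq_left, smul_eq_zero, not_or]
    exact ⟨ht.ne', fun h => by simp [h, l1] at hv1⟩
  simpa [l1_smul, abs_of_pos ht, hv1] using hB _ hmem γ hγ hne

theorem pinsker_const_via_quadratic_forms_general (K : ℕ) (α : ℝ) :
    2 * sInf {r : ℝ | ∃ p ∈ relintSimplex K, ∃ q ∈ relintSimplex K,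
        p ≠ q ∧ r = breg α p q / (l1 (p - q)) ^ 2} =
      sInf {r : ℝ | ∃ v ∈ tangentSphere K, ∃ γ ∈ relintSimplex K,
        r = ∑ k, (v k) ^ 2 * (γ k) ^ (α - 2)} := by
  rw [← smul_eq_mul, ← Real.sInf_smul_of_nonneg zero_le_two, Real.sInf_eq_sSup_lowerBounds,
    Real.sInf_eq_sSup_lowerBounds]
  congr 1
  ext B
  simp only [mem_lowerBounds, ← Set.image_smul, Set.forall_mem_image, Set.mem_ofPred_eq,
    forall_exists_index, and_imp, smul_eq_mul]
  constructor
  · rintro hB _ v hv γ hγ rfl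
    exact le_tsallisHessForm_of_forall_le_breg (fun p hp q hq hpq => hB p hp q hq hpq rfl) hγ hv
  · rintro hB _ p hp q hq hpq rfl
    have hL : 0 < l1 (p - q) ^ 2 := pow_pos (l1_pos.mpr (sub_ne_zero.mpr hpq)) 2
    rw [← mul_div_assoc, le_div_iff₀ hL]
    exact mul_sq_l1_le_two_mul_breg (fun γ hγ v hv => hB _ v hv γ hγ rfl) hp hq

theorem pinsker_const_via_quadratic_forms (K : ℕ) (hK : 2 ≤ K) (α : ℝ) :
    2 * sInf {r : ℝ | ∃ p ∈ relintSimplex K, ∃ q ∈ relintSimplex K,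
        p ≠ q ∧ r = breg α p q / (l1 (p - q)) ^ 2} =
      sInf {r : ℝ | ∃ v ∈ tangentSphere K, ∃ γ ∈ relintSimplex K,
        r = ∑ k, (v k) ^ 2 * (γ k) ^ (α - 2)} :=
  pinsker_const_via_quadratic_forms_general K α
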